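/- (Alexander's lemma for simply connected spaces.) Let X be a simply connected topological space, let K₁, K₂ be disjoint closed subsets of X, and let x, y ∈ X ∖ (K₁ ∪ K₂). If there is a path joining x and y in X ∖ K₁ and a path joining x and y in X ∖ K₂, then there is a path joining x and y in X ∖ (K₁ ∪ K₂). -/
import Mathlib

namespace AlexWalk

/-- Four grid directions. -/
inductive Dir | N | E | S | W
deriving DecidableEq

open Dir

instance : Fintype Dir :=
  ⟨⟨{N, E, S, W}, by decide⟩, by intro d; cases d <;> decide⟩

/-- The displacement vector of a direction. -/
def vec : Dir → ℤ × ℤ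
  | N => (0, 1) | E => (1, 0) | S => (0, -1) | W => (-1, 0)

/-- Rotate left (counterclockwise). -/
def rotL : Dir → Dir
  | N => W | W => S | S => E | E => N

/-- Rotate right (clockwise). -/
def rotR : Dir → Dir
  | N => E | E => S | S => W | W => N

/-- Offset from the tail of a directed edge to (the lower-left corner of) the cell
on its left. -/
def vL : Dir → ℤ × ℤ
  | N => (-1, 0) | E => (0, 0) | S => (0, -1) | W => (-1, -1)

/-- Offset to the cell on the right of a directed edge. -/
def vR : Dir → ℤ × ℤ
  | N => (0, 0) | E => (0, -1) | S => (-1, -1) | W => (-1, 0)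

/-- A directed edge of the grid: tail vertex plus direction. -/
abbrev Edge := (ℤ × ℤ) × Dir

/-- Head vertex of an edge. -/
def hd (e : Edge) : ℤ × ℤ := e.1 + vec e.2

/-- Cell on the left of an edge. -/
def Lc (e : Edge) : ℤ × ℤ := e.1 + vL e.2

/-- Cell on the right of an edge. -/
def Rc (e : Edge) : ℤ × ℤ := e.1 + vR e.2

/-- Cell ahead-left of an edge. -/
def FL (e : Edge) : ℤ × ℤ := hd e + vL e.2

/-- Cell ahead-right of an edge. -/
def FR (e : Edge) : ℤ × ℤ := hd e + vR e.2

-- algebraic identities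
lemma i_rotRL (d : Dir) : rotR (rotL d) = d := by cases d <;> rfl
lemma i_rotLR (d : Dir) : rotL (rotR d) = d := by cases d <;> rfl
lemma i1 (d : Dir) : vec d + vL (rotL d) = vL d := by cases d <;> rfl
lemma i2 (d : Dir) : vR (rotL d) = vL d := by cases d <;> rfl
lemma i3 (d : Dir) : vL (rotR d) = vR d := by cases d <;> rfl
lemma Lc_turnL (u : ℤ × ℤ) (d : Dir) : Lc (u + vec d, rotL d) = Lc (u, d) := by
  simp only [Lc, add_assoc]; congr 1; cases d <;> decide

lemma Rc_turnL (u : ℤ × ℤ) (d : Dir) : Rc (u + vec d, rotL d) = FL (u, d) := by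
  simp only [Rc, FL, hd, add_assoc]; congr 1; cases d <;> decide

lemma Lc_straight (u : ℤ × ℤ) (d : Dir) : Lc (u + vec d, d) = FL (u, d) := rfl

lemma Rc_straight (u : ℤ × ℤ) (d : Dir) : Rc (u + vec d, d) = FR (u, d) := rfl

lemma Lc_turnR (u : ℤ × ℤ) (d : Dir) : Lc (u + vec d, rotR d) = FR (u, d) := by
  simp only [Lc, FR, hd, add_assoc]; congr 1; cases d <;> decide

lemma Rc_turnR (u : ℤ × ℤ) (d : Dir) : Rc (u + vec d, rotR d) = Rc (u, d) := by
  simp only [Rc, add_assoc]; congr 1; cases d <;> decide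


lemma bl_turnL (u : ℤ × ℤ) (d : Dir) :
    (u + vec d) - vec (rotL d) + vL (rotL d) = Rc (u, d) := by
  simp only [Rc, sub_eq_add_neg, add_assoc]; congr 1; cases d <;> decide

lemma bl_turnR (u : ℤ × ℤ) (d : Dir) :
    (u + vec d) - vec (rotR d) + vL (rotR d) = FL (u, d) := by
  simp only [FL, hd, sub_eq_add_neg, add_assoc]; congr 1; cases d <;> decide

lemma br_turnR (u : ℤ × ℤ) (d : Dir) :
    (u + vec d) - vec (rotR d) + vR (rotR d) = Lc (u, d) := by
  simp only [Lc, sub_eq_add_neg, add_assoc]; congr 1; cases d <;> decide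

section Walk

variable (col : ℤ × ℤ → Option Bool)

/-- An edge is valid if the cell on its left is white and the cell on its right colored. -/
def valid (e : Edge) : Prop := col (Lc e) = none ∧ col (Rc e) ≠ none

/-- One step of the interface walk. -/
def step (e : Edge) : Edge :=
  if col (FL e) ≠ none then (hd e, rotL e.2)
  else if col (FR e) ≠ none then (hd e, e.2)
  else (hd e, rotR e.2)

/-- The reverse step of the interface walk. -/
def Rv (e : Edge) : Edge :=
  if col (e.1 - vec e.2 + vL e.2) ≠ none then (e.1 - vec (rotR e.2), rotR e.2)
  else if col (e.1 - vec e.2 + vR e.2) ≠ none then (e.1 - vec e.2, e.2)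
  else (e.1 - vec (rotL e.2), rotL e.2)

variable {col}

lemma step_valid {e : Edge} (h : valid col e) : valid col (step col e) := by
  obtain ⟨u, d⟩ := e
  unfold step
  split_ifs with h1 h2
  · exact ⟨by rw [show hd (u,d) = u + vec d from rfl, Lc_turnL]; exact h.1,
      by rw [show hd (u,d) = u + vec d from rfl, Rc_turnL]; exact h1⟩
  · exact ⟨by push_neg at h1; exact h1, h2⟩
  · push_neg at h1 h2
    exact ⟨by rw [show hd (u,d) = u + vec d from rfl, Lc_turnR]; exact h2,
      by rw [show hd (u,d) = u + vec d from rfl, Rc_turnR]; exact h.2⟩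

lemma Rv_step {e : Edge} (h : valid col e) : Rv col (step col e) = e := by
  obtain ⟨u, d⟩ := e
  unfold step
  split_ifs with h1 h2
  · unfold Rv
    simp only [show hd (u,d) = u + vec d from rfl]
    rw [bl_turnL, if_pos h.2, i_rotRL, add_sub_cancel_right]
  · unfold Rv
    simp only [show hd (u,d) = u + vec d from rfl]
    rw [show (u + vec d) - vec d + vL d = Lc (u, d) by rw [add_sub_cancel_right]; rfl,
      if_neg (by simp [h.1]),
      show (u + vec d) - vec d + vR d = Rc (u, d) by rw [add_sub_cancel_right]; rfl,
      if_pos h.2, add_sub_cancel_right]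
  · unfold Rv
    simp only [show hd (u,d) = u + vec d from rfl]
    rw [bl_turnR, if_neg (by simp [h1]), br_turnR, if_neg (by simp [h.1]), i_rotLR,
      add_sub_cancel_right]

end Walk


section Geom

variable (col : ℤ × ℤ → Option Bool) (n : ℤ)

/-- The closed unit cell with lower-left corner `c`. -/
def cellSet (c : ℤ × ℤ) : Set (ℝ × ℝ) :=
  Set.Icc (c.1 : ℝ) ((c.1 : ℝ) + 1) ×ˢ Set.Icc (c.2 : ℝ) ((c.2 : ℝ) + 1)

/-- A cell is good if it is white and lies in the horizontal range of the board. -/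
def goodCell (c : ℤ × ℤ) : Prop := col c = none ∧ 0 ≤ c.1 ∧ c.1 ≤ n - 1

/-- The union of all good cells. -/
def Good : Set (ℝ × ℝ) := ⋃ (c : ℤ × ℤ) (_ : goodCell col n c), cellSet c

/-- Center of a cell. -/
noncomputable def ctr (c : ℤ × ℤ) : ℝ × ℝ := ((c.1 : ℝ) + 1/2, (c.2 : ℝ) + 1/2)

variable {col n}

lemma ctr_mem_cell (c : ℤ × ℤ) : ctr c ∈ cellSet c := by
  constructor <;> constructor <;> simp [ctr] <;> norm_num

lemma cell_subset_good {c : ℤ × ℤ} (hc : goodCell col n c) : cellSet c ⊆ Good col n := by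
  intro z hz
  exact Set.mem_iUnion.2 ⟨c, Set.mem_iUnion.2 ⟨hc, hz⟩⟩

lemma convex_cell (c : ℤ × ℤ) : Convex ℝ (cellSet c) :=
  (convex_Icc _ _).prod (convex_Icc _ _)

lemma joined_cell {c : ℤ × ℤ} (hc : goodCell col n c) {a b : ℝ × ℝ}
    (ha : a ∈ cellSet c) (hb : b ∈ cellSet c) : JoinedIn (Good col n) a b :=
  (((convex_cell c).isPathConnected ⟨a, ha⟩).joinedIn a ha b hb).mono (cell_subset_good hc)

/-- Centers of adjacent (or equal) good cells are joined in the good region. -/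
lemma joined_ctr {c c' : ℤ × ℤ} (hc : goodCell col n c) (hc' : goodCell col n c')
    (ha1 : |c'.1 - c.1| ≤ 1) (ha2 : |c'.2 - c.2| ≤ 1) :
    JoinedIn (Good col n) (ctr c) (ctr c') := by
  set M : ℝ × ℝ := (((c.1 : ℝ) + c'.1) / 2 + 1/2, ((c.2 : ℝ) + c'.2) / 2 + 1/2) with hM
  have h1 : |(c'.1 : ℝ) - c.1| ≤ 1 := by
    exact_mod_cast (by exact_mod_cast ha1 : |((c'.1 - c.1 : ℤ) : ℝ)| ≤ 1)
  have h2 : |(c'.2 : ℝ) - c.2| ≤ 1 := by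
    exact_mod_cast (by exact_mod_cast ha2 : |((c'.2 - c.2 : ℤ) : ℝ)| ≤ 1)
  rw [abs_le] at h1 h2
  have hMc : M ∈ cellSet c := by
    constructor <;> constructor <;> simp only [hM, cellSet] <;> push_cast <;> nlinarith [h1.1, h1.2, h2.1, h2.2]
  have hMc' : M ∈ cellSet c' := by
    constructor <;> constructor <;> simp only [hM, cellSet] <;> push_cast <;> nlinarith [h1.1, h1.2, h2.1, h2.2]
  exact (joined_cell hc (ctr_mem_cell c) hMc).trans (joined_cell hc' hMc' (ctr_mem_cell c'))

end Geom


section Main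

variable (col : ℤ × ℤ → Option Bool) (n : ℤ)

/-- Hypotheses on the extended coloring. -/
structure Hyps : Prop where
  hn : 1 ≤ n
  hA : ∀ i j : ℤ, n ≤ j → col (i, j) = none
  hB : ∀ i j : ℤ, j < 0 → i ≠ n → col (i, j) = none
  hC : ∀ j : ℤ, j < n → col (n, j) = some true
  hE : ∀ i j : ℤ, n + 1 ≤ i → col (i, j) = none
  hG0 : ∀ i : ℤ, 0 ≤ i → i ≤ n - 1 → col (i, 0) = none
  hG1 : ∀ i : ℤ, 0 ≤ i → i ≤ n - 1 → col (i, n - 1) = none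
  hH : ∀ i j : ℤ, col (i, j) = some true → 1 ≤ i
  hF : ∀ i j i' j' : ℤ, col (i, j) = some true → col (i', j') = some false →
        i' < i - 1 ∨ i + 1 < i' ∨ j' < j - 1 ∨ j + 1 < j' 

open Dir

/-- The ascending edges on the left of the virtual column. -/
def Ae (j : ℤ) : Edge := ((n, j), N)

/-- Starting edge. -/
def e₀ : Edge := ((n, 0), N)

/-- The final edge: traversing it certifies that the walk has reached the top. -/
def me : Edge := ((n, n - 1), N)

/-- The cap edge above the virtual column. -/
def Te : Edge := ((n, n), E)

/-- The descending edges right of the virtual column. -/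
def De (j : ℤ) : Edge := ((n + 1, j + 1), S)

/-- The orbit of the interface walk. -/
def o (t : ℕ) : Edge := (step col)^[t] (e₀ n)

variable {col n}

lemma pair_add (a b c d : ℤ) : ((a, b) : ℤ × ℤ) + (c, d) = (a + c, b + d) := rfl

lemma pair_arith (a b c d e f : ℤ) :
    ((a, b) : ℤ × ℤ) - (c, d) + (e, f) = (a - c + e, b - d + f) := rfl

lemma pair_sub (a b c d : ℤ) : ((a, b) : ℤ × ℤ) - (c, d) = (a - c, b - d) := rfl

lemma RvN (u : ℤ × ℤ) : Rv col ((u, N) : Edge) =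
    if col (u.1 - 1, u.2 - 1) ≠ none then ((u.1 - 1, u.2), E)
    else if col (u.1, u.2 - 1) ≠ none then ((u.1, u.2 - 1), N)
    else ((u.1 + 1, u.2), W) := by
  obtain ⟨a, b⟩ := u
  simp only [Rv, vec, vL, vR, rotL, rotR, pair_arith, pair_sub]
  norm_num
  simp only [sub_eq_add_neg]

lemma RvE (u : ℤ × ℤ) : Rv col ((u, E) : Edge) =
    if col (u.1 - 1, u.2) ≠ none then ((u.1, u.2 + 1), S)
    else if col (u.1 - 1, u.2 - 1) ≠ none then ((u.1 - 1, u.2), E)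
    else ((u.1, u.2 - 1), N) := by
  obtain ⟨a, b⟩ := u
  simp only [Rv, vec, vL, vR, rotL, rotR, pair_arith, pair_sub]
  norm_num
  simp only [sub_eq_add_neg]

lemma RvS (u : ℤ × ℤ) : Rv col ((u, S) : Edge) =
    if col (u.1, u.2) ≠ none then ((u.1 + 1, u.2), W)
    else if col (u.1 - 1, u.2) ≠ none then ((u.1, u.2 + 1), S)
    else ((u.1 - 1, u.2), E) := by
  obtain ⟨a, b⟩ := u
  simp only [Rv, vec, vL, vR, rotL, rotR, pair_arith, pair_sub]
  norm_num
  simp only [sub_eq_add_neg]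

lemma RvW (u : ℤ × ℤ) : Rv col ((u, W) : Edge) =
    if col (u.1, u.2 - 1) ≠ none then ((u.1, u.2 - 1), N)
    else if col (u.1, u.2) ≠ none then ((u.1 + 1, u.2), W)
    else ((u.1, u.2 + 1), S) := by
  obtain ⟨a, b⟩ := u
  simp only [Rv, vec, vL, vR, rotL, rotR, pair_arith, pair_sub]
  norm_num
  simp only [sub_eq_add_neg]

variable (h : Hyps col n)
include h

lemma valid_e₀ : valid col (e₀ n) := by
  have hn := h.hn
  constructor
  · show col ((n, 0) + vL N) = none
    show col (n + -1, 0 + 0) = none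
    rw [show n + -1 = n - 1 by ring, show (0:ℤ) + 0 = 0 by ring]
    exact h.hG0 (n - 1) (by omega) le_rfl
  · show col ((n, 0) + vR N) ≠ none
    show col (n + 0, 0 + 0) ≠ none
    rw [show n + 0 = n by ring, show (0:ℤ) + 0 = 0 by ring, h.hC 0 (by omega)]
    simp

lemma valid_o (t : ℕ) : valid col (o col n t) := by
  induction t with
  | zero => exact valid_e₀ h
  | succ t ih => rw [show o col n (t+1) = step col (o col n t) from Function.iterate_succ_apply' _ _ _]
                 exact step_valid ih

lemma o_back (t : ℕ) : Rv col (o col n (t + 1)) = o col n t := by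
  rw [show o col n (t+1) = step col (o col n t) from Function.iterate_succ_apply' _ _ _]
  exact Rv_step (valid_o h t)

lemma Rv_iter (a t : ℕ) : (Rv col)^[a] (o col n (a + t)) = o col n t := by
  induction a with
  | zero => simp
  | succ a ih =>
      have heq : a + 1 + t = (a + t) + 1 := by omega
      rw [heq, Function.iterate_succ_apply, o_back h, ih]

lemma Rv_Ae {j : ℤ} (hj : j ≤ 0) : Rv col (Ae n j) = Ae n (j - 1) := by
  have hn := h.hn
  unfold Ae
  rw [RvN]
  simp only []
  rw [show col (n - 1, j - 1) = none from h.hB _ _ (by omega) (by omega),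
    h.hC (j - 1) (by omega)]
  simp

lemma no_A_neg (t : ℕ) {j : ℤ} (hj : j < 0) : o col n t ≠ Ae n j := by
  induction t generalizing j with
  | zero =>
      intro hEq
      have : (0 : ℤ) = j := congrArg (fun e : Edge => e.1.2) hEq
      omega
  | succ t ih =>
      intro hEq
      have h1 : o col n t = Ae n (j - 1) := by
        rw [← o_back h t, hEq, Rv_Ae h (by omega)]
      exact ih (by omega) h1

lemma no_revisit (t : ℕ) : o col n (t + 1) ≠ e₀ n := by
  intro hEq
  have h1 : o col n t = Ae n (-1) := by
    rw [← o_back h t, hEq]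
    exact Rv_Ae h le_rfl
  exact no_A_neg h t (by omega) h1

lemma Rv_Te : Rv col (Te n) = me n := by
  have hn := h.hn
  unfold Te me
  rw [RvE]
  simp only []
  rw [show col (n - 1, n) = none from h.hA _ _ le_rfl,
    show col (n - 1, n - 1) = none from h.hG1 _ (by omega) le_rfl]
  simp

lemma Rv_Dtop : Rv col (De n (n - 1)) = Te n := by
  unfold De Te
  rw [show n - 1 + 1 = n by ring, RvS]
  simp only []
  rw [show col (n + 1, n) = none from h.hE _ _ le_rfl,
    show col (n + 1 - 1, n) = none from by rw [show n + 1 - 1 = n by ring]; exact h.hA _ _ le_rfl]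
  simp [pair_sub]

lemma Rv_D {j : ℤ} (hj : j ≤ n - 2) : Rv col (De n j) = De n (j + 1) := by
  unfold De
  rw [RvS]
  simp only []
  rw [show col (n + 1, j + 1) = none from h.hE _ _ le_rfl,
    show ((n:ℤ) + 1 - 1, j + 1) = (n, j + 1) from by rw [show n + 1 - 1 = n by ring],
    h.hC (j + 1) (by omega)]
  simp

lemma mT (t : ℕ) (hEq : o col n t = Te n) : ∃ t' < t, o col n t' = me n := by
  cases t with
  | zero =>
      exfalso
      have : (N : Dir) = E := congrArg (fun e : Edge => e.2) hEq
      simp at this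
  | succ s =>
      refine ⟨s, Nat.lt_succ_self s, ?_⟩
      rw [← o_back h s, hEq, Rv_Te h]

lemma mD (k : ℕ) : ∀ (t : ℕ) (j : ℤ), j = n - 1 - k → o col n t = De n j →
    ∃ t' < t, o col n t' = me n := by
  induction k with
  | zero =>
      intro t j hj hEq
      cases t with
      | zero =>
          exfalso
          have : (N : Dir) = S := congrArg (fun e : Edge => e.2) hEq
          simp at this
      | succ s =>
          have h1 : o col n s = Te n := by
            rw [← o_back h s, hEq, hj]
            simpa using Rv_Dtop h
          obtain ⟨t', ht', hm⟩ := mT h s h1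
          exact ⟨t', by omega, hm⟩
  | succ k ih =>
      intro t j hj hEq
      cases t with
      | zero =>
          exfalso
          have : (N : Dir) = S := congrArg (fun e : Edge => e.2) hEq
          simp at this
      | succ s =>
          have h1 : o col n s = De n (j + 1) := by
            rw [← o_back h s, hEq, Rv_D h (by omega)]
          obtain ⟨t', ht', hm⟩ := ih s (j + 1) (by push_cast; omega) h1
          exact ⟨t', by omega, hm⟩

lemma right_red (t : ℕ) : col (Rc (o col n t)) = some true := by
  have hn := h.hn
  induction t with
  | zero =>
      show col ((n, 0) + vR N) = some true
      simp only [vR, pair_add]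
      norm_num
      exact h.hC 0 (by omega)
  | succ t ih =>
      rw [show o col n (t+1) = step col (o col n t) from Function.iterate_succ_apply' _ _ _]
      rcases hoe : o col n t with ⟨u, d⟩
      rw [hoe] at ih
      unfold step
      split_ifs with h1 h2
      · -- turn left : new right cell is FL
        rw [show hd (u, d) = u + vec d from rfl, show ((u, d) : Edge).2 = d from rfl, Rc_turnL]
        rcases hcc : col (FL (u, d)) with _ | b
        · exact absurd hcc h1
        · cases b
          · -- blue : contradiction with separation
            exfalso
            have hsep := h.hF (Rc (u,d)).1 (Rc (u,d)).2 (FL (u,d)).1 (FL (u,d)).2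
              (by rw [show ((Rc (u,d)).1, (Rc (u,d)).2) = Rc (u,d) from rfl]; exact ih)
              (by rw [show ((FL (u,d)).1, (FL (u,d)).2) = FL (u,d) from rfl]; exact hcc)
            rcases u with ⟨a, b⟩
            cases d <;> simp only [Rc, FL, hd, vec, vL, vR, pair_add] at hsep <;> omega
          · rfl
      · -- straight : new right cell is FR
        rw [show hd (u, d) = u + vec d from rfl, show ((u, d) : Edge).2 = d from rfl, Rc_straight]
        rcases hcc : col (FR (u, d)) with _ | b
        · exact absurd hcc h2
        · cases b
          · exfalso
            have hsep := h.hF (Rc (u,d)).1 (Rc (u,d)).2 (FR (u,d)).1 (FR (u,d)).2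
              (by rw [show ((Rc (u,d)).1, (Rc (u,d)).2) = Rc (u,d) from rfl]; exact ih)
              (by rw [show ((FR (u,d)).1, (FR (u,d)).2) = FR (u,d) from rfl]; exact hcc)
            rcases u with ⟨a, b⟩
            cases d <;> simp only [Rc, FR, hd, vec, vL, vR, pair_add] at hsep <;> omega
          · rfl
      · -- turn right : right cell unchanged
        rw [show hd (u, d) = u + vec d from rfl, show ((u, d) : Edge).2 = d from rfl, Rc_turnR]
        exact ih

lemma Rc_cases (t : ℕ) :
    (1 ≤ (Rc (o col n t)).1 ∧ (Rc (o col n t)).1 ≤ n ∧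
      0 ≤ (Rc (o col n t)).2 ∧ (Rc (o col n t)).2 ≤ n - 1) ∨
    (∃ j : ℤ, j < 0 ∧ o col n t = De n j) := by
  have hn := h.hn
  have hred := right_red h t
  have hval := valid_o h t
  rcases hoe : o col n t with ⟨u, d⟩
  rw [hoe] at hred hval
  have hi1 : 1 ≤ (Rc (u, d)).1 := h.hH _ _ (by rwa [show ((Rc (u,d)).1, (Rc (u,d)).2) = Rc (u,d) from rfl])
  have hin : (Rc (u, d)).1 ≤ n := by
    by_contra hcon
    rw [show Rc (u,d) = ((Rc (u,d)).1, (Rc (u,d)).2) from rfl, h.hE _ _ (by omega)] at hred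
    simp at hred
  have hjn : (Rc (u, d)).2 ≤ n - 1 := by
    by_contra hcon
    rw [show Rc (u,d) = ((Rc (u,d)).1, (Rc (u,d)).2) from rfl, h.hA _ _ (by omega)] at hred
    simp at hred
  by_cases hj0 : 0 ≤ (Rc (u, d)).2
  · exact Or.inl ⟨hi1, hin, hj0, hjn⟩
  · push_neg at hj0
    have hiN : (Rc (u, d)).1 = n := by
      by_contra hcon
      rw [show Rc (u,d) = ((Rc (u,d)).1, (Rc (u,d)).2) from rfl, h.hB _ _ hj0 hcon] at hred
      simp at hred
    rcases u with ⟨a, b⟩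
    cases d
    · -- N : this is an A-edge, excluded
      exfalso
      simp only [Rc, vR, pair_add, add_zero] at hiN hj0
      exact no_A_neg h t (j := b) (by omega) (by rw [hoe, Ae]; congr 1; exact congrArg₂ Prod.mk hiN rfl)
    · -- E : left cell would be red
      exfalso
      simp only [Rc, vR, pair_add, add_zero] at hiN hj0
      have : col (Lc ((a, b), E)) = some true := by
        show col ((a, b) + (0,0)) = some true
        rw [pair_add, show ((a + 0 : ℤ), (b + 0 : ℤ)) = (a, b) from by norm_num]
        rw [show a = n from by omega]
        exact h.hC b (by omega)
      rw [hval.1] at this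
      simp at this
    · -- S : this is a D-edge
      simp only [Rc, vR, pair_add] at hiN hj0
      refine Or.inr ⟨b - 1, by omega, ?_⟩
      unfold De
      congr 1
      exact congrArg₂ Prod.mk (by omega) (by omega)
    · -- W : left cell would be red
      exfalso
      simp only [Rc, vR, pair_add, add_zero] at hiN hj0
      have : col (Lc ((a, b), W)) = some true := by
        show col ((a, b) + (-1,-1)) = some true
        rw [pair_add]
        rw [show ((a + -1 : ℤ)) = n from by omega]
        exact h.hC _ (by omega)
      rw [hval.1] at this
      simp at this

lemma o_inj : Function.Injective (o col n) := by
  intro a b hab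
  by_contra hne
  wlog hlt : a < b generalizing a b
  · exact this hab.symm (Ne.symm hne) (by omega)
  have h1 : (Rv col)^[a] (o col n (a + (b - a))) = o col n (b - a) := Rv_iter h _ _
  have h2 : (Rv col)^[a] (o col n (a + 0)) = o col n 0 := Rv_iter h _ _
  rw [show a + (b - a) = b by omega] at h1
  rw [← hab] at h1
  rw [show a + 0 = a from rfl] at h2
  rw [h2] at h1
  have := no_revisit h (b - a - 1)
  rw [show b - a - 1 + 1 = b - a by omega] at this
  exact this h1.symm

lemma exists_me : ∃ t, o col n t = me n := by
  have hn := h.hn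
  by_contra hm
  push_neg at hm
  have hbox : ∀ t, 1 ≤ (Rc (o col n t)).1 ∧ (Rc (o col n t)).1 ≤ n ∧
      0 ≤ (Rc (o col n t)).2 ∧ (Rc (o col n t)).2 ≤ n - 1 := by
    intro t
    refine (Rc_cases h t).resolve_right ?_
    rintro ⟨j, hj, hD⟩
    have hjk : j = n - 1 - ((n - 1 - j).toNat : ℤ) := by
      have := Int.toNat_of_nonneg (show 0 ≤ n - 1 - j by omega)
      omega
    obtain ⟨t', _, hme⟩ := mD h (n - 1 - j).toNat t j hjk hD
    exact hm t' hme
  have hinj : Function.Injective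
      (fun t => ((Rc (o col n t)).1, (Rc (o col n t)).2, (o col n t).2)) := by
    intro a b hab
    simp only [Prod.mk.injEq] at hab
    apply o_inj h
    rcases hoa : o col n a with ⟨u, d⟩
    rcases hob : o col n b with ⟨u', d'⟩
    rw [hoa, hob] at hab
    obtain ⟨h1, h2, h3⟩ := hab
    subst h3
    have hRc : Rc (u, d) = Rc (u', d) := Prod.ext h1 h2
    have hu : u = u' := by
      have : u + vR d = u' + vR d := hRc
      exact add_right_cancel this
    rw [hu]
  have hmem : ∀ t : ℕ, ((Rc (o col n t)).1, (Rc (o col n t)).2, (o col n t).2) ∈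
      (Set.Icc (1:ℤ) n) ×ˢ ((Set.Icc (0:ℤ) (n-1)) ×ˢ (Set.univ : Set Dir)) := by
    intro t
    obtain ⟨a1, a2, a3, a4⟩ := hbox t
    exact ⟨⟨a1, a2⟩, ⟨a3, a4⟩, trivial⟩
  exact ((Set.finite_Icc _ _).prod ((Set.finite_Icc _ _).prod Set.finite_univ)).not_infinite
    (Set.infinite_of_injective_forall_mem hinj hmem)

section Extract

open scoped Classical in
/-- The first time the walk traverses the final edge. -/
noncomputable def Tmin : ℕ := Nat.find (exists_me h)

lemma Tmin_spec : o col n (Tmin h) = me n := by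
  unfold Tmin
  exact Nat.find_spec (exists_me h)

lemma Tmin_min {t : ℕ} (ht : t < Tmin h) : o col n t ≠ me n := by
  unfold Tmin at ht
  exact Nat.find_min (exists_me h) ht

lemma notTe {t : ℕ} (ht : t ≤ Tmin h) : o col n t ≠ Te n := by
  intro hEq
  obtain ⟨t', ht', hme⟩ := mT h t hEq
  exact Tmin_min h (by omega) hme

lemma notDe {t : ℕ} (ht : t ≤ Tmin h) (j : ℤ) : o col n t ≠ De n j := by
  intro hEq
  have hred := right_red h t
  rw [hEq] at hred
  have hrc : Rc (De n j) = (n, j) := by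
    show ((n + 1, j + 1) : ℤ × ℤ) + vR S = (n, j)
    simp only [vR, pair_add]
    norm_num
  rw [hrc] at hred
  have hjn : j ≤ n - 1 := by
    by_contra hcon
    rw [h.hA _ _ (by omega)] at hred
    simp at hred
  have hjk : j = n - 1 - ((n - 1 - j).toNat : ℤ) := by
    have := Int.toNat_of_nonneg (show 0 ≤ n - 1 - j by omega)
    omega
  obtain ⟨t', ht', hme⟩ := mD h (n - 1 - j).toNat t j hjk hEq
  exact Tmin_min h (by omega) hme

lemma box_le {t : ℕ} (ht : t ≤ Tmin h) :
    1 ≤ (Rc (o col n t)).1 ∧ (Rc (o col n t)).1 ≤ n ∧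
      0 ≤ (Rc (o col n t)).2 ∧ (Rc (o col n t)).2 ≤ n - 1 := by
  refine (Rc_cases h t).resolve_right ?_
  rintro ⟨j, hj, hD⟩
  exact notDe h ht j hD

lemma white_Lc (t : ℕ) : col (Lc (o col n t)) = none := (valid_o h t).1

lemma Lc_range {t : ℕ} (ht : t ≤ Tmin h) :
    0 ≤ (Lc (o col n t)).1 ∧ (Lc (o col n t)).1 ≤ n - 1 := by
  have hn := h.hn
  have hbox := box_le h ht
  have hwhite := white_Lc h t
  have hTe := notTe h ht
  have hDe := notDe h ht
  rcases hoe : o col n t with ⟨u, d⟩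
  rw [hoe] at hbox hwhite hTe hDe
  rcases u with ⟨a, b⟩
  cases d
  · -- N
    simp only [Lc, Rc, vL, vR, pair_add] at hbox hwhite ⊢
    omega
  · -- E
    simp only [Lc, Rc, vL, vR, pair_add] at hbox hwhite ⊢
    constructor
    · omega
    · by_contra hcon
      have haN : a + 0 = n := by omega
      have hb : ¬ (b + 0 < n) := fun hlt => by
        rw [show ((a + 0 : ℤ), (b + 0 : ℤ)) = (n, b + 0) from by rw [haN],
          h.hC _ hlt] at hwhite
        simp at hwhite
      have hbn : b = n := by omega
      exact hTe (by rw [Te]; subst hbn; congr 1; exact congrArg₂ Prod.mk (by omega) rfl)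
  · -- S
    simp only [Lc, Rc, vL, vR, pair_add] at hbox hwhite ⊢
    constructor
    · omega
    · by_contra hcon
      rcases (by omega : a + 0 = n ∨ a + 0 = n + 1) with haN | haN
      · have hb : ¬ (b + -1 < n) := fun hlt => by
          rw [show ((a + 0 : ℤ), (b + -1 : ℤ)) = (n, b + -1) from by rw [haN],
            h.hC _ hlt] at hwhite
          simp at hwhite
        omega
      · exact hDe (b - 1) (by rw [De]; congr 1; exact congrArg₂ Prod.mk (by omega) (by omega))
  · -- W
    simp only [Lc, Rc, vL, vR, pair_add] at hbox hwhite ⊢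
    constructor
    · omega
    · by_contra hcon
      have haN : a + -1 = n := by omega
      have hb : ¬ (b + -1 < n) := fun hlt => by
        rw [show ((a + -1 : ℤ), (b + -1 : ℤ)) = (n, b + -1) from by rw [haN],
          h.hC _ hlt] at hwhite
        simp at hwhite
      omega

lemma goodCell_Lc {t : ℕ} (ht : t ≤ Tmin h) : goodCell col n (Lc (o col n t)) := by
  refine ⟨white_Lc h t, ?_, ?_⟩
  · exact (Lc_range h ht).1
  · exact (Lc_range h ht).2

lemma turnR_FL {t : ℕ} (ht : t + 1 ≤ Tmin h) (h1 : col (FL (o col n t)) = none)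
    (h2 : col (FR (o col n t)) = none) :
    0 ≤ (FL (o col n t)).1 ∧ (FL (o col n t)).1 ≤ n - 1 := by
  have hn := h.hn
  have hts : t ≤ Tmin h := by omega
  have hbox := box_le h hts
  have hTe := notTe h hts
  have hDe := notDe h hts
  have hwhite := white_Lc h t
  rcases hoe : o col n t with ⟨⟨a, b⟩, d⟩
  rw [hoe] at hbox h1 h2 hTe hDe hwhite
  cases d
  · -- N
    simp only [FL, Rc, hd, vec, vL, vR, pair_add] at hbox ⊢
    omega
  · -- E
    simp only [FL, FR, Lc, Rc, hd, vec, vL, vR, pair_add] at hbox h1 h2 hwhite ⊢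
    constructor
    · omega
    · by_contra hcon
      rcases (by omega : a + 1 + 0 = n ∨ a + 1 + 0 = n + 1) with haN | haN
      · have hb1 : ¬ (b + 0 + 0 < n) := fun hlt => by
          rw [show ((a + 1 + 0 : ℤ), (b + 0 + 0 : ℤ)) = (n, b + 0 + 0) from by rw [haN],
            h.hC _ hlt] at h1
          simp at h1
        have hb2 : ¬ (b + 0 + -1 < n) := fun hlt => by
          rw [show ((a + 1 + 0 : ℤ), (b + 0 + -1 : ℤ)) = (n, b + 0 + -1) from by rw [haN],
            h.hC _ hlt] at h2
          simp at h2
        omega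
      · have hb : ¬ (b + 0 < n) := fun hlt => by
          rw [show ((a + 0 : ℤ), (b + 0 : ℤ)) = (n, b + 0) from by
              rw [show (a + 0 : ℤ) = n by omega],
            h.hC _ hlt] at hwhite
          simp at hwhite
        refine hTe ?_
        rw [Te]
        congr 1
        exact congrArg₂ Prod.mk (by omega) (by omega)
  · -- S
    simp only [FL, Rc, hd, vec, vL, vR, pair_add] at hbox h1 ⊢
    constructor
    · omega
    · by_contra hcon
      rcases (by omega : a + 0 + 0 = n ∨ a + 0 + 0 = n + 1) with haN | haN
      · have hb : ¬ (b + -1 + -1 < n) := fun hlt => by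
          rw [show ((a + 0 + 0 : ℤ), (b + -1 + -1 : ℤ)) = (n, b + -1 + -1) from by rw [haN],
            h.hC _ hlt] at h1
          simp at h1
        omega
      · exact hDe (b - 1) (by rw [De]; congr 1; exact congrArg₂ Prod.mk (by omega) (by omega))
  · -- W
    simp only [FL, Rc, hd, vec, vL, vR, pair_add] at hbox ⊢
    omega

lemma chain (t : ℕ) (ht : t ≤ Tmin h) :
    JoinedIn (Good col n) (ctr ((n - 1 : ℤ), (0 : ℤ))) (ctr (Lc (o col n t))) := by
  have hn := h.hn
  induction t with
  | zero =>
      have hLc : Lc (o col n 0) = ((n - 1 : ℤ), (0 : ℤ)) := by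
        show (n, 0) + vL N = _
        simp only [vL, pair_add]
        exact congrArg₂ Prod.mk (by ring) (by ring)
      rw [hLc]
      refine JoinedIn.refl ?_
      exact cell_subset_good ⟨h.hG0 _ (by omega) le_rfl, by omega, by omega⟩ (ctr_mem_cell _)
  | succ t ih =>
      have ht' : t ≤ Tmin h := by omega
      have hJ := ih ht'
      have hgt : goodCell col n (Lc (o col n t)) := goodCell_Lc h ht'
      have hgt1 : goodCell col n (Lc (o col n (t+1))) := goodCell_Lc h ht
      have hstep : o col n (t+1) = step col (o col n t) := Function.iterate_succ_apply' _ _ _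
      by_cases h1 : col (FL (o col n t)) ≠ none
      · -- turn left : left cell unchanged
        have hLL : Lc (o col n (t+1)) = Lc (o col n t) := by
          rw [hstep]
          rcases hoe : o col n t with ⟨u, d⟩
          unfold step
          rw [if_pos (by rwa [hoe] at h1)]
          rw [show hd (u, d) = u + vec d from rfl, show ((u, d) : Edge).2 = d from rfl]
          exact Lc_turnL u d
        rw [hLL]
        exact hJ
      · push_neg at h1
        by_cases h2 : col (FR (o col n t)) ≠ none
        · -- straight : new left cell is FL
          have hLF : Lc (o col n (t+1)) = FL (o col n t) := by
            rw [hstep]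
            rcases hoe : o col n t with ⟨u, d⟩
            unfold step
            rw [if_neg (by rw [hoe] at h1; simp [h1]), if_pos (by rwa [hoe] at h2)]
            rfl
          refine hJ.trans (joined_ctr hgt hgt1 ?_ ?_) <;>
            · rw [hLF]
              rcases (o col n t) with ⟨⟨a, b⟩, d⟩
              refine abs_le.mpr ⟨?_, ?_⟩ <;>
                cases d <;> simp only [FL, Lc, hd, vec, vL, pair_add] <;> omega
        · -- turn right : go via FL
          push_neg at h2
          have hLF : Lc (o col n (t+1)) = FR (o col n t) := by
            rw [hstep]
            rcases hoe : o col n t with ⟨u, d⟩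
            unfold step
            rw [if_neg (by rw [hoe] at h1; simp [h1]), if_neg (by rw [hoe] at h2; simp [h2])]
            rw [show hd (u, d) = u + vec d from rfl, show ((u, d) : Edge).2 = d from rfl]
            exact Lc_turnR u d
          have hgFL : goodCell col n (FL (o col n t)) :=
            ⟨h1, (turnR_FL h ht h1 h2).1, (turnR_FL h ht h1 h2).2⟩
          refine (hJ.trans (joined_ctr hgt hgFL ?_ ?_)).trans
            (joined_ctr hgFL hgt1 ?_ ?_)
          · rcases (o col n t) with ⟨⟨a, b⟩, d⟩
            refine abs_le.mpr ⟨?_, ?_⟩ <;>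
              cases d <;> simp only [FL, Lc, hd, vec, vL, pair_add] <;> omega
          · rcases (o col n t) with ⟨⟨a, b⟩, d⟩
            refine abs_le.mpr ⟨?_, ?_⟩ <;>
              cases d <;> simp only [FL, Lc, hd, vec, vL, pair_add] <;> omega
          · rw [hLF]
            rcases (o col n t) with ⟨⟨a, b⟩, d⟩
            refine abs_le.mpr ⟨?_, ?_⟩ <;>
              cases d <;> simp only [FL, FR, hd, vec, vL, vR, pair_add] <;> omega
          · rw [hLF]
            rcases (o col n t) with ⟨⟨a, b⟩, d⟩
            refine abs_le.mpr ⟨?_, ?_⟩ <;>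
              cases d <;> simp only [FL, FR, hd, vec, vL, vR, pair_add] <;> omega

/-- Main conclusion of the discrete walk: the centers of the cells just below and
just above the board, in the column left of the virtual column, are joined inside
the good region. -/
theorem walk_main :
    JoinedIn (Good col n) (ctr ((n - 1 : ℤ), (-1 : ℤ))) (ctr ((n - 1 : ℤ), (n : ℤ))) := by
  have hn := h.hn
  have hg0 : goodCell col n ((n - 1 : ℤ), (-1 : ℤ)) :=
    ⟨h.hB _ _ (by omega) (by omega), by omega, by omega⟩
  have hg1 : goodCell col n ((n - 1 : ℤ), (0 : ℤ)) :=
    ⟨h.hG0 _ (by omega) le_rfl, by omega, by omega⟩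
  have hg2 : goodCell col n ((n - 1 : ℤ), (n - 1 : ℤ)) :=
    ⟨h.hG1 _ (by omega) le_rfl, by omega, by omega⟩
  have hg3 : goodCell col n ((n - 1 : ℤ), (n : ℤ)) :=
    ⟨h.hA _ _ le_rfl, by omega, by omega⟩
  have hLcT : Lc (o col n (Tmin h)) = ((n - 1 : ℤ), (n - 1 : ℤ)) := by
    rw [Tmin_spec h]
    show (n, n - 1) + vL N = _
    simp only [vL, pair_add]
    exact congrArg₂ Prod.mk (by ring) (by ring)
  have hmid := chain h (Tmin h) le_rfl
  rw [hLcT] at hmid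
  refine ((joined_ctr hg0 hg1 (by simp) (by simp)).trans hmid).trans
    (joined_ctr hg2 hg3 (by simp) ?_)
  simp only []
  refine abs_le.mpr ⟨by omega, by omega⟩

end Extract

end Main

end AlexWalk

open AlexWalk in
set_option maxHeartbeats 3200000 in
/-- Alexander's lemma for simply connected spaces: if disjoint closed sets `K₁, K₂`
each fail to separate `x` from `y` (witnessed by paths avoiding them), then their
union does not separate `x` from `y`. -/
theorem alexander_lemma_simply_connected
    {X : Type*} [TopologicalSpace X] [SimplyConnectedSpace X]
    (K₁ K₂ : Set X) (hK₁ : IsClosed K₁) (hK₂ : IsClosed K₂) (hd : Disjoint K₁ K₂)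
    (x y : X) (hx : x ∈ (K₁ ∪ K₂)ᶜ) (hy : y ∈ (K₁ ∪ K₂)ᶜ)
    (h₁ : JoinedIn K₁ᶜ x y) (h₂ : JoinedIn K₂ᶜ x y) :
    JoinedIn (K₁ ∪ K₂)ᶜ x y := by
  classical
  set p₁ : Path x y := h₁.somePath with hp₁def
  set p₂ : Path x y := h₂.somePath with hp₂def
  have hp₁ : ∀ t, p₁ t ∉ K₁ := fun t => h₁.somePath_mem t
  have hp₂ : ∀ t, p₂ t ∉ K₂ := fun t => h₂.somePath_mem t
  obtain ⟨H⟩ : Path.Homotopic p₁ p₂ := SimplyConnectedSpace.paths_homotopic p₁ p₂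
  set pr : ℝ → unitInterval := Set.projIcc 0 1 zero_le_one with hprdef
  set G₀ : ℝ × ℝ → X := fun w => H (pr w.1, pr w.2) with hG₀def
  have hG₀cont : Continuous G₀ := by
    exact H.continuous.comp
      ((continuous_projIcc.comp continuous_fst).prodMk (continuous_projIcc.comp continuous_snd))
  have hpr0 : ∀ a : ℝ, a ≤ 0 → pr a = 0 := by
    intro a ha
    apply Subtype.ext
    rw [hprdef, Set.coe_projIcc]
    rw [min_eq_right (ha.trans zero_le_one), max_eq_left ha]
    rfl
  have hpr1 : ∀ a : ℝ, 1 ≤ a → pr a = 1 := by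
    intro a ha
    apply Subtype.ext
    rw [hprdef, Set.coe_projIcc]
    rw [min_eq_left ha, max_eq_right zero_le_one]
    rfl
  have hGleft : ∀ a b : ℝ, a ≤ 0 → G₀ (a, b) = p₁ (pr b) := by
    intro a b ha
    show H (pr a, pr b) = p₁ (pr b)
    rw [hpr0 a ha]
    exact H.apply_zero (pr b)
  have hGright : ∀ a b : ℝ, 1 ≤ a → G₀ (a, b) = p₂ (pr b) := by
    intro a b ha
    show H (pr a, pr b) = p₂ (pr b)
    rw [hpr1 a ha]
    exact H.apply_one (pr b)
  have hGbot : ∀ a b : ℝ, b ≤ 0 → G₀ (a, b) = x := by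
    intro a b hb
    show H (pr a, pr b) = x
    rw [hpr0 b hb]
    exact H.source (pr a)
  have hGtop : ∀ a b : ℝ, 1 ≤ b → G₀ (a, b) = y := by
    intro a b hb
    show H (pr a, pr b) = y
    rw [hpr1 b hb]
    exact H.target (pr a)
  -- the compact square and the two bad sets
  set Q : Set (ℝ × ℝ) := Set.Icc (0:ℝ) 1 ×ˢ Set.Icc (0:ℝ) 1 with hQdef
  have hQcomp : IsCompact Q := isCompact_Icc.prod isCompact_Icc
  set A : Set (ℝ × ℝ) := Q ∩ G₀ ⁻¹' K₁ with hAdef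
  set B : Set (ℝ × ℝ) := Q ∩ G₀ ⁻¹' K₂ with hBdef
  have hAcomp : IsCompact A := hQcomp.inter_right (hK₁.preimage hG₀cont)
  have hBcomp : IsCompact B := hQcomp.inter_right (hK₂.preimage hG₀cont)
  -- a generic positive-minimum lemma
  have aux : ∀ (S : Set (ℝ × ℝ)) (f : ℝ × ℝ → ℝ), IsCompact S → Continuous f →
      (∀ z ∈ S, 0 < f z) → ∃ ε > 0, ∀ z ∈ S, ε ≤ f z := by
    intro S f hS hf hpos
    rcases S.eq_empty_or_nonempty with hE | hne
    · exact ⟨1, one_pos, by simp [hE]⟩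
    · obtain ⟨z₀, hz₀, hmin⟩ := hS.exists_isMinOn hne hf.continuousOn
      exact ⟨f z₀, hpos z₀ hz₀, fun z hz => isMinOn_iff.mp hmin z hz⟩
  obtain ⟨ε₁, hε₁, hAl⟩ : ∃ ε > 0, ∀ z ∈ A, ε ≤ z.1 := by
    refine aux A (fun z => z.1) hAcomp continuous_fst ?_
    rintro ⟨a, b⟩ ⟨⟨ha, _⟩, hz2⟩
    rcases lt_or_eq_of_le ha.1 with hlt | heq
    · exact hlt
    · exfalso
      have : G₀ (a, b) = p₁ (pr b) := hGleft a b (le_of_eq heq.symm)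
      rw [Set.mem_preimage, this] at hz2
      exact hp₁ _ hz2
  obtain ⟨ε₂, hε₂, hBr⟩ : ∃ ε > 0, ∀ z ∈ B, ε ≤ 1 - z.1 := by
    refine aux B (fun z => 1 - z.1) hBcomp (continuous_const.sub continuous_fst) ?_
    rintro ⟨a, b⟩ ⟨⟨ha, _⟩, hz2⟩
    rcases lt_or_eq_of_le ha.2 with hlt | heq
    · show (0:ℝ) < 1 - a
      linarith
    · exfalso
      have : G₀ (a, b) = p₂ (pr b) := hGright a b heq.ge
      rw [Set.mem_preimage, this] at hz2
      exact hp₂ _ hz2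
  obtain ⟨ε₃, hε₃, hABb⟩ : ∃ ε > 0, ∀ z ∈ A ∪ B, ε ≤ z.2 := by
    refine aux (A ∪ B) (fun z => z.2) (hAcomp.union hBcomp) continuous_snd ?_
    rintro ⟨a, b⟩ hz
    have hzQ : (a, b) ∈ Q := by rcases hz with hz | hz <;> exact hz.1
    rcases lt_or_eq_of_le hzQ.2.1 with hlt | heq
    · exact hlt
    · exfalso
      have hxy : G₀ (a, b) = x := hGbot a b (le_of_eq heq.symm)
      rcases hz with ⟨_, hz2⟩ | ⟨_, hz2⟩ <;> rw [Set.mem_preimage, hxy] at hz2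
      · exact hx (Or.inl hz2)
      · exact hx (Or.inr hz2)
  obtain ⟨ε₄, hε₄, hABt⟩ : ∃ ε > 0, ∀ z ∈ A ∪ B, ε ≤ 1 - z.2 := by
    refine aux (A ∪ B) (fun z => 1 - z.2) (hAcomp.union hBcomp) (continuous_const.sub continuous_snd) ?_
    rintro ⟨a, b⟩ hz
    have hzQ : (a, b) ∈ Q := by rcases hz with hz | hz <;> exact hz.1
    rcases lt_or_eq_of_le hzQ.2.2 with hlt | heq
    · show (0:ℝ) < 1 - b
      linarith
    · exfalso
      have hxy : G₀ (a, b) = y := hGtop a b heq.ge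
      rcases hz with ⟨_, hz2⟩ | ⟨_, hz2⟩ <;> rw [Set.mem_preimage, hxy] at hz2
      · exact hy (Or.inl hz2)
      · exact hy (Or.inr hz2)
  -- Lebesgue number for the cover by the complements of the bad sets
  obtain ⟨δ, hδ, hLeb⟩ : ∃ δ > 0, ∀ z ∈ Q, ∃ b : Bool,
      Metric.ball z δ ⊆ (if b then G₀ ⁻¹' K₁ᶜ else G₀ ⁻¹' K₂ᶜ) := by
    refine lebesgue_number_lemma_of_metric hQcomp (fun b => ?_) ?_
    · cases b
      · exact (hK₂.preimage hG₀cont).isOpen_compl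
      · exact (hK₁.preimage hG₀cont).isOpen_compl
    · intro z _
      by_cases hz1 : G₀ z ∈ K₁
      · refine Set.mem_iUnion.2 ⟨false, ?_⟩
        show z ∈ G₀ ⁻¹' K₂ᶜ
        exact fun hz2 => (Set.disjoint_left.mp hd hz1) hz2
      · exact Set.mem_iUnion.2 ⟨true, by simpa using hz1⟩
  -- choose the grid size
  obtain ⟨N, hN⟩ := exists_nat_gt (2/δ + 1/ε₁ + 1/ε₂ + 1/ε₃ + 1/ε₄ + 1)
  have hterms : 0 < 2/δ ∧ 0 < 1/ε₁ ∧ 0 < 1/ε₂ ∧ 0 < 1/ε₃ ∧ 0 < 1/ε₄ := by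
    refine ⟨by positivity, by positivity, by positivity, by positivity, by positivity⟩
  have hNR : (1:ℝ) < N := by
    obtain ⟨t1, t2, t3, t4, t5⟩ := hterms
    linarith
  set n : ℤ := (N : ℤ) with hndef
  have hn1 : 1 ≤ n := by
    have : (1:ℕ) ≤ N := by exact_mod_cast hNR.le
    omega
  have hnR : ((n : ℤ) : ℝ) = (N : ℝ) := by push_cast [hndef]; rfl
  have hnpos : (0:ℝ) < (n : ℝ) := by rw [hnR]; linarith
  have hconv : ∀ c ε : ℝ, 0 < ε → c/ε < (n:ℝ) → c/(n:ℝ) < ε := by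
    intro c ε hε hlt
    rw [div_lt_iff₀ hnpos, mul_comm]
    exact (div_lt_iff₀ hε).mp hlt
  have hδn : 2/(n:ℝ) < δ := by
    refine hconv 2 δ hδ ?_
    rw [hnR]
    obtain ⟨t1, t2, t3, t4, t5⟩ := hterms
    linarith
  have hε₁n : 1/(n:ℝ) < ε₁ := by
    refine hconv 1 ε₁ hε₁ ?_
    rw [hnR]; obtain ⟨t1, t2, t3, t4, t5⟩ := hterms; linarith
  have hε₂n : 1/(n:ℝ) < ε₂ := by
    refine hconv 1 ε₂ hε₂ ?_
    rw [hnR]; obtain ⟨t1, t2, t3, t4, t5⟩ := hterms; linarith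
  have hε₃n : 1/(n:ℝ) < ε₃ := by
    refine hconv 1 ε₃ hε₃ ?_
    rw [hnR]; obtain ⟨t1, t2, t3, t4, t5⟩ := hterms; linarith
  have hε₄n : 1/(n:ℝ) < ε₄ := by
    refine hconv 1 ε₄ hε₄ ?_
    rw [hnR]; obtain ⟨t1, t2, t3, t4, t5⟩ := hterms; linarith
  -- the scaled map and the coloring
  set φ : ℝ × ℝ → X := fun z => G₀ (z.1 / (n:ℝ), z.2 / (n:ℝ)) with hφdef
  have hφcont : Continuous φ :=
    hG₀cont.comp ((continuous_fst.div_const _).prodMk (continuous_snd.div_const _))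
  set meets₁ : ℤ × ℤ → Prop := fun c => ∃ z ∈ cellSet c, φ z ∈ K₁ with hm₁def
  set meets₂ : ℤ × ℤ → Prop := fun c => ∃ z ∈ cellSet c, φ z ∈ K₂ with hm₂def
  set col : ℤ × ℤ → Option Bool := fun c =>
    if 0 ≤ c.1 ∧ c.1 ≤ n - 1 ∧ 0 ≤ c.2 ∧ c.2 ≤ n - 1 then
      (if meets₁ c then some true else if meets₂ c then some false else none)
    else if c.1 = n ∧ c.2 < n then some true
    else if c.1 ≤ -1 ∧ 0 ≤ c.2 ∧ c.2 ≤ n - 1 then some false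
    else none with hcoldef
  have hcol_eval : ∀ i j : ℤ, col (i, j) =
      if 0 ≤ i ∧ i ≤ n - 1 ∧ 0 ≤ j ∧ j ≤ n - 1 then
        (if meets₁ (i, j) then some true else if meets₂ (i, j) then some false else none)
      else if i = n ∧ j < n then some true
      else if i ≤ -1 ∧ 0 ≤ j ∧ j ≤ n - 1 then some false
      else none := fun i j => rfl
  -- witnesses in A / B from cells that meet the bad sets
  have hmA : ∀ i j : ℤ, 0 ≤ i → i ≤ n - 1 → 0 ≤ j → j ≤ n - 1 → meets₁ (i, j) →
      ∃ w ∈ A, (i:ℝ)/n ≤ w.1 ∧ w.1 ≤ ((i:ℝ)+1)/n ∧ (j:ℝ)/n ≤ w.2 ∧ w.2 ≤ ((j:ℝ)+1)/n := by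
    intro i j hi0 hi1 hj0 hj1 hm
    obtain ⟨z, hz, hzK⟩ := hm
    obtain ⟨⟨hx1, hx2⟩, ⟨hy1, hy2⟩⟩ := hz
    have hi0R : (0:ℝ) ≤ (i:ℝ) := by exact_mod_cast hi0
    have hi1R : (i:ℝ) + 1 ≤ (n:ℝ) := by exact_mod_cast (by omega : i + 1 ≤ n)
    have hj0R : (0:ℝ) ≤ (j:ℝ) := by exact_mod_cast hj0
    have hj1R : (j:ℝ) + 1 ≤ (n:ℝ) := by exact_mod_cast (by omega : j + 1 ≤ n)
    refine ⟨(z.1/(n:ℝ), z.2/(n:ℝ)), ⟨⟨⟨?_, ?_⟩, ⟨?_, ?_⟩⟩, hzK⟩, ?_, ?_, ?_, ?_⟩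
    · exact div_nonneg (by linarith) hnpos.le
    · rw [div_le_one hnpos]; linarith
    · exact div_nonneg (by linarith) hnpos.le
    · rw [div_le_one hnpos]; linarith
    · exact (div_le_div_iff_of_pos_right hnpos).mpr hx1
    · exact (div_le_div_iff_of_pos_right hnpos).mpr hx2
    · exact (div_le_div_iff_of_pos_right hnpos).mpr hy1
    · exact (div_le_div_iff_of_pos_right hnpos).mpr hy2
  have hmB : ∀ i j : ℤ, 0 ≤ i → i ≤ n - 1 → 0 ≤ j → j ≤ n - 1 → meets₂ (i, j) →
      ∃ w ∈ B, (i:ℝ)/n ≤ w.1 ∧ w.1 ≤ ((i:ℝ)+1)/n ∧ (j:ℝ)/n ≤ w.2 ∧ w.2 ≤ ((j:ℝ)+1)/n := by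
    intro i j hi0 hi1 hj0 hj1 hm
    obtain ⟨z, hz, hzK⟩ := hm
    obtain ⟨⟨hx1, hx2⟩, ⟨hy1, hy2⟩⟩ := hz
    have hi0R : (0:ℝ) ≤ (i:ℝ) := by exact_mod_cast hi0
    have hi1R : (i:ℝ) + 1 ≤ (n:ℝ) := by exact_mod_cast (by omega : i + 1 ≤ n)
    have hj0R : (0:ℝ) ≤ (j:ℝ) := by exact_mod_cast hj0
    have hj1R : (j:ℝ) + 1 ≤ (n:ℝ) := by exact_mod_cast (by omega : j + 1 ≤ n)
    refine ⟨(z.1/(n:ℝ), z.2/(n:ℝ)), ⟨⟨⟨?_, ?_⟩, ⟨?_, ?_⟩⟩, hzK⟩, ?_, ?_, ?_, ?_⟩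
    · exact div_nonneg (by linarith) hnpos.le
    · rw [div_le_one hnpos]; linarith
    · exact div_nonneg (by linarith) hnpos.le
    · rw [div_le_one hnpos]; linarith
    · exact (div_le_div_iff_of_pos_right hnpos).mpr hx1
    · exact (div_le_div_iff_of_pos_right hnpos).mpr hx2
    · exact (div_le_div_iff_of_pos_right hnpos).mpr hy1
    · exact (div_le_div_iff_of_pos_right hnpos).mpr hy2
  -- board cells touching the bad sets keep away from the appropriate edges
  have hbdred : ∀ i j : ℤ, 0 ≤ i → i ≤ n - 1 → 0 ≤ j → j ≤ n - 1 → meets₁ (i, j) → 1 ≤ i := by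
    intro i j hi0 hi1 hj0 hj1 hm
    by_contra hcon
    have hi : i = 0 := by omega
    obtain ⟨w, hwA, hw1, hw2, _, _⟩ := hmA i j hi0 hi1 hj0 hj1 hm
    have := hAl w hwA
    rw [hi] at hw2
    push_cast at hw2
    linarith
  have hbdblue : ∀ i j : ℤ, 0 ≤ i → i ≤ n - 1 → 0 ≤ j → j ≤ n - 1 → meets₂ (i, j) →
      i ≤ n - 2 := by
    intro i j hi0 hi1 hj0 hj1 hm
    by_contra hcon
    have hi : i = n - 1 := by omega
    obtain ⟨w, hwB, hw1, hw2, _, _⟩ := hmB i j hi0 hi1 hj0 hj1 hm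
    have := hBr w hwB
    rw [hi] at hw1
    push_cast at hw1
    have heq : ((n:ℝ) - 1)/n = 1 - 1/n := by field_simp
    rw [heq] at hw1
    linarith
  have hbot_white : ∀ i j : ℤ, 0 ≤ i → i ≤ n - 1 → j = 0 ∨ j = n - 1 → ¬ meets₁ (i, j) ∧ ¬ meets₂ (i, j) := by
    intro i j hi0 hi1 hj
    have hj0 : 0 ≤ j := by omega
    have hj1 : j ≤ n - 1 := by omega
    constructor
    · intro hm
      obtain ⟨w, hwA, _, _, hw3, hw4⟩ := hmA i j hi0 hi1 hj0 hj1 hm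
      have h3 := hABb w (Or.inl hwA)
      have h4 := hABt w (Or.inl hwA)
      rcases hj with hj | hj <;> rw [hj] at hw3 hw4 <;> push_cast at hw3 hw4
      · linarith
      · have heq : ((n:ℝ) - 1)/n = 1 - 1/n := by field_simp
        rw [heq] at hw3
        linarith
    · intro hm
      obtain ⟨w, hwB, _, _, hw3, hw4⟩ := hmB i j hi0 hi1 hj0 hj1 hm
      have h3 := hABb w (Or.inr hwB)
      have h4 := hABt w (Or.inr hwB)
      rcases hj with hj | hj <;> rw [hj] at hw3 hw4 <;> push_cast at hw3 hw4
      · linarith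
      · have heq : ((n:ℝ) - 1)/n = 1 - 1/n := by field_simp
        rw [heq] at hw3
        linarith
  -- Lebesgue separation: board cells meeting the two different bad sets are far apart
  have hsep : ∀ i j i' j' : ℤ, 0 ≤ i → i ≤ n - 1 → 0 ≤ j → j ≤ n - 1 →
      0 ≤ i' → i' ≤ n - 1 → 0 ≤ j' → j' ≤ n - 1 → meets₁ (i, j) → meets₂ (i', j') →
      (i - 1 ≤ i' ∧ i' ≤ i + 1 ∧ j - 1 ≤ j' ∧ j' ≤ j + 1) → False := by
    intro i j i' j' hi0 hi1 hj0 hj1 hi0' hi1' hj0' hj1' hm1 hm2 hclose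
    obtain ⟨w₁, hw₁A, ha1, ha2, ha3, ha4⟩ := hmA i j hi0 hi1 hj0 hj1 hm1
    obtain ⟨w₂, hw₂B, hb1, hb2, hb3, hb4⟩ := hmB i' j' hi0' hi1' hj0' hj1' hm2
    have hinv : (0:ℝ) < 1/(n:ℝ) := by positivity
    have h2n : 2/(n:ℝ) = 2 * (1/(n:ℝ)) := by ring
    rw [h2n] at hδn
    set za : ℝ × ℝ := (((i:ℝ) + 1/2)/n, ((j:ℝ) + 1/2)/n) with hzadef
    have hi0R : (0:ℝ) ≤ (i:ℝ) := by exact_mod_cast hi0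
    have hi1R : (i:ℝ) ≤ (n:ℝ) - 1 := by exact_mod_cast hi1
    have hj0R : (0:ℝ) ≤ (j:ℝ) := by exact_mod_cast hj0
    have hj1R : (j:ℝ) ≤ (n:ℝ) - 1 := by exact_mod_cast hj1
    have hzaQ : za ∈ Q := by
      refine ⟨⟨?_, ?_⟩, ⟨?_, ?_⟩⟩
      · exact div_nonneg (by linarith) hnpos.le
      · rw [div_le_one hnpos]; linarith
      · exact div_nonneg (by linarith) hnpos.le
      · rw [div_le_one hnpos]; linarith
    obtain ⟨bb, hball⟩ := hLeb za hzaQ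
    have hdist₁ : dist w₁ za < δ := by
      rw [Prod.dist_eq]
      refine max_lt ?_ ?_ <;> rw [Real.dist_eq, abs_lt]
      · have e1 : ((i:ℝ) + 1/2)/n - (i:ℝ)/n = (1/2) * (1/(n:ℝ)) := by ring
        have e2 : ((i:ℝ) + 1)/n - ((i:ℝ) + 1/2)/n = (1/2) * (1/(n:ℝ)) := by ring
        constructor <;> simp only [hzadef] <;> linarith
      · have e1 : ((j:ℝ) + 1/2)/n - (j:ℝ)/n = (1/2) * (1/(n:ℝ)) := by ring
        have e2 : ((j:ℝ) + 1)/n - ((j:ℝ) + 1/2)/n = (1/2) * (1/(n:ℝ)) := by ring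
        constructor <;> simp only [hzadef] <;> linarith
    have hdist₂ : dist w₂ za < δ := by
      have hc1 : (i:ℝ) - 1 ≤ (i':ℝ) := by exact_mod_cast (by omega : i - 1 ≤ i')
      have hc2 : (i':ℝ) ≤ (i:ℝ) + 1 := by exact_mod_cast hclose.2.1
      have hc3 : (j:ℝ) - 1 ≤ (j':ℝ) := by exact_mod_cast (by omega : j - 1 ≤ j')
      have hc4 : (j':ℝ) ≤ (j:ℝ) + 1 := by exact_mod_cast hclose.2.2.2
      have hd1 : ((i:ℝ) - 1)/n ≤ (i':ℝ)/n := (div_le_div_iff_of_pos_right hnpos).mpr hc1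
      have hd2 : ((i':ℝ) + 1)/n ≤ ((i:ℝ) + 2)/n := (div_le_div_iff_of_pos_right hnpos).mpr (by linarith)
      have hd3 : ((j:ℝ) - 1)/n ≤ (j':ℝ)/n := (div_le_div_iff_of_pos_right hnpos).mpr hc3
      have hd4 : ((j':ℝ) + 1)/n ≤ ((j:ℝ) + 2)/n := (div_le_div_iff_of_pos_right hnpos).mpr (by linarith)
      rw [Prod.dist_eq]
      refine max_lt ?_ ?_ <;> rw [Real.dist_eq, abs_lt]
      · have e1 : ((i:ℝ) + 1/2)/n - ((i:ℝ) - 1)/n = (3/2) * (1/(n:ℝ)) := by ring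
        have e2 : ((i:ℝ) + 2)/n - ((i:ℝ) + 1/2)/n = (3/2) * (1/(n:ℝ)) := by ring
        constructor <;> simp only [hzadef] <;> linarith
      · have e1 : ((j:ℝ) + 1/2)/n - ((j:ℝ) - 1)/n = (3/2) * (1/(n:ℝ)) := by ring
        have e2 : ((j:ℝ) + 2)/n - ((j:ℝ) + 1/2)/n = (3/2) * (1/(n:ℝ)) := by ring
        constructor <;> simp only [hzadef] <;> linarith
    cases bb
    · -- ball avoids K₂, but w₂ maps into K₂
      have := hball (Metric.mem_ball.mpr hdist₂)
      exact this hw₂B.2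
    · -- ball avoids K₁, but w₁ maps into K₁
      have := hball (Metric.mem_ball.mpr hdist₁)
      simp only [if_true] at this
      exact this hw₁A.2
  -- characterizations of the colors
  have hred_char : ∀ i j : ℤ, col (i, j) = some true →
      (0 ≤ i ∧ i ≤ n - 1 ∧ 0 ≤ j ∧ j ≤ n - 1 ∧ meets₁ (i, j)) ∨ (i = n ∧ j < n) := by
    intro i j hcol
    rw [hcol_eval] at hcol
    split_ifs at hcol with b1 b2 b3 b4 b5 <;>
      first
        | exact Or.inl ⟨b1.1, b1.2.1, b1.2.2.1, b1.2.2.2, b2⟩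
        | exact Or.inr b4
        | simp at hcol
  have hblue_char : ∀ i j : ℤ, col (i, j) = some false →
      (0 ≤ i ∧ i ≤ n - 1 ∧ 0 ≤ j ∧ j ≤ n - 1 ∧ meets₂ (i, j)) ∨
        (i ≤ -1 ∧ 0 ≤ j ∧ j ≤ n - 1) := by
    intro i j hcol
    rw [hcol_eval] at hcol
    split_ifs at hcol with b1 b2 b3 b4 b5 <;>
      first
        | exact Or.inl ⟨b1.1, b1.2.1, b1.2.2.1, b1.2.2.2, b3⟩
        | exact Or.inr b5
        | simp at hcol
  have hwhite_bd : ∀ i j : ℤ, 0 ≤ i → i ≤ n - 1 → 0 ≤ j → j ≤ n - 1 → col (i, j) = none →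
      ¬ meets₁ (i, j) ∧ ¬ meets₂ (i, j) := by
    intro i j hi0 hi1 hj0 hj1 hcol
    rw [hcol_eval, if_pos ⟨hi0, hi1, hj0, hj1⟩] at hcol
    split_ifs at hcol with m1 m2 <;>
      first
        | exact ⟨m1, m2⟩
        | simp at hcol
  -- the hypotheses of the discrete walk
  have hyps : Hyps col n := by
    refine ⟨hn1, ?_, ?_, ?_, ?_, ?_, ?_, ?_, ?_⟩
    · intro i j hj
      rw [hcol_eval, if_neg (by omega), if_neg (by omega), if_neg (by omega)]
    · intro i j hj hi
      rw [hcol_eval, if_neg (by omega), if_neg (by push_neg; intro h'; omega),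
        if_neg (by omega)]
    · intro j hj
      rw [hcol_eval, if_neg (by omega), if_pos ⟨rfl, hj⟩]
    · intro i j hi
      rw [hcol_eval, if_neg (by omega), if_neg (by omega), if_neg (by omega)]
    · intro i hi0 hi1
      rw [hcol_eval, if_pos ⟨hi0, hi1, le_rfl, by omega⟩]
      have hw := hbot_white i 0 hi0 hi1 (Or.inl rfl)
      rw [if_neg hw.1, if_neg hw.2]
    · intro i hi0 hi1
      rw [hcol_eval, if_pos ⟨hi0, hi1, by omega, le_rfl⟩]
      have hw := hbot_white i (n - 1) hi0 hi1 (Or.inr rfl)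
      rw [if_neg hw.1, if_neg hw.2]
    · intro i j hcol
      rcases hred_char i j hcol with ⟨hi0, hi1, hj0, hj1, hm⟩ | ⟨hi, _⟩
      · exact hbdred i j hi0 hi1 hj0 hj1 hm
      · omega
    · intro i j i' j' hr hb
      by_contra hcon
      push_neg at hcon
      obtain ⟨hc1, hc2, hc3, hc4⟩ := hcon
      rcases hred_char i j hr with ⟨hi0, hi1, hj0, hj1, hm1⟩ | ⟨hiN, _⟩
      · rcases hblue_char i' j' hb with ⟨hi0', hi1', hj0', hj1', hm2⟩ | ⟨hi', _, _⟩
        · exact hsep i j i' j' hi0 hi1 hj0 hj1 hi0' hi1' hj0' hj1' hm1 hm2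
            ⟨by omega, by omega, by omega, by omega⟩
        · have := hbdred i j hi0 hi1 hj0 hj1 hm1
          omega
      · rcases hblue_char i' j' hb with ⟨hi0', hi1', hj0', hj1', hm2⟩ | ⟨hi', _, _⟩
        · have := hbdblue i' j' hi0' hi1' hj0' hj1' hm2
          omega
        · omega
  -- run the walk and push the resulting path through φ
  have J := walk_main hyps
  have hsub : φ '' Good col n ⊆ (K₁ ∪ K₂)ᶜ := by
    rintro _ ⟨z, hzG, rfl⟩
    obtain ⟨c, hc⟩ := Set.mem_iUnion.1 hzG
    obtain ⟨hgood, hzc⟩ := Set.mem_iUnion.1 hc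
    obtain ⟨ci, cj⟩ := c
    obtain ⟨hwhite, hc0, hc1⟩ := hgood
    obtain ⟨⟨hz1, hz2⟩, ⟨hz3, hz4⟩⟩ := hzc
    intro hbad
    rcases (by omega : cj ≤ -1 ∨ (0 ≤ cj ∧ cj ≤ n - 1) ∨ n ≤ cj) with hcase | ⟨hj0, hj1⟩ | hcase
    · have hle : z.2 / (n:ℝ) ≤ 0 := by
        refine div_nonpos_iff.mpr (Or.inr ⟨?_, hnpos.le⟩)
        have : ((cj:ℝ) + 1) ≤ 0 := by exact_mod_cast (by omega : cj + 1 ≤ 0)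
        linarith
      have hxz : φ z = x := hGbot _ _ hle
      rw [hxz] at hbad
      exact hx hbad
    · have hwb := hwhite_bd ci cj hc0 hc1 hj0 hj1 hwhite
      rcases hbad with hbad | hbad
      · exact hwb.1 ⟨z, ⟨⟨hz1, hz2⟩, ⟨hz3, hz4⟩⟩, hbad⟩
      · exact hwb.2 ⟨z, ⟨⟨hz1, hz2⟩, ⟨hz3, hz4⟩⟩, hbad⟩
    · have hle : 1 ≤ z.2 / (n:ℝ) := by
        rw [le_div_iff₀ hnpos]
        have : (n:ℝ) ≤ (cj:ℝ) := by exact_mod_cast hcase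
        linarith
      have hyz : φ z = y := hGtop _ _ hle
      rw [hyz] at hbad
      exact hy hbad
  have hstart : φ (ctr ((n - 1 : ℤ), (-1 : ℤ))) = x := by
    refine hGbot _ _ ?_
    show (((-1 : ℤ):ℝ) + 1/2) / (n:ℝ) ≤ 0
    refine div_nonpos_iff.mpr (Or.inr ⟨?_, hnpos.le⟩)
    push_cast
    linarith
  have hend : φ (ctr ((n - 1 : ℤ), (n : ℤ))) = y := by
    refine hGtop _ _ ?_
    show (1:ℝ) ≤ (((n : ℤ):ℝ) + 1/2) / (n:ℝ)
    rw [le_div_iff₀ hnpos]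
    push_cast
    linarith
  have hfin := (J.map hφcont).mono hsub
  rw [hstart, hend] at hfin
  exact hfin
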